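/- Theorem 4.3, characterization part: Let p be a prime and C a linear code of length n over R = F_p + vF_p. Then C is self-dual if and only if there exist self-dual codes 𝒞₁ and 𝒞₂ of length n over F_p such that C = v𝒞₂ ⊕ (1-v)𝒞₁, i.e. C = {v·ŷ + (1-v)·x̂ : x ∈ 𝒞₁, y ∈ 𝒞₂}. -/
import Mathlib


/-- The Euclidean dual of a linear code. -/
def dualCode {S : Type*} [CommRing S] {ι : Type*} [Fintype ι]
    (C : Submodule S (ι → S)) : Submodule S (ι → S) where
  carrier := {u | ∀ w ∈ C, ∑ i, u i * w i = 0}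
  zero_mem' := by intro w hw; simp
  add_mem' := by
    intro a b ha hb w hw
    simp only [Set.mem_setOf_eq] at ha hb ⊢
    simp only [Pi.add_apply, add_mul, Finset.sum_add_distrib, ha w hw, hb w hw, add_zero]
  smul_mem' := by
    intro c a ha w hw
    simp only [Set.mem_setOf_eq] at ha ⊢
    simp only [Pi.smul_apply, smul_eq_mul, mul_assoc, ← Finset.mul_sum, ha w hw, mul_zero]

/-- The image of an `F_p` vector in `R^n`, `x̂ i = (x i, x i)`. -/
def emb {p n : ℕ} (x : Fin n → ZMod p) : Fin n → ZMod p × ZMod p := fun i => (x i, x i)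

/-- `C₁ = {a ∈ F_p^n | a + vb ∈ C for some b}`. -/
def codeC1 {p n : ℕ} (C : Submodule (ZMod p × ZMod p) (Fin n → ZMod p × ZMod p)) :
    Submodule (ZMod p) (Fin n → ZMod p) where
  carrier := {a | ∃ b : Fin n → ZMod p, (fun i => (a i, a i + b i)) ∈ C}
  zero_mem' := by
    refine ⟨0, ?_⟩
    convert C.zero_mem using 1
    funext i; simp
  add_mem' := by
    rintro a a' ⟨b, hb⟩ ⟨b', hb'⟩
    refine ⟨b + b', ?_⟩
    convert C.add_mem hb hb' using 1
    funext i
    simp [Prod.ext_iff]; ring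
  smul_mem' := by
    rintro c a ⟨b, hb⟩
    refine ⟨c • b, ?_⟩
    convert C.smul_mem ((c, c) : ZMod p × ZMod p) hb using 1
    funext i
    simp [Prod.ext_iff, Prod.smul_def, smul_eq_mul]; ring

/-- `C₂ = {a + b ∈ F_p^n | a + vb ∈ C}`. -/
def codeC2 {p n : ℕ} (C : Submodule (ZMod p × ZMod p) (Fin n → ZMod p × ZMod p)) :
    Submodule (ZMod p) (Fin n → ZMod p) where
  carrier := {s | ∃ a b : Fin n → ZMod p, (fun i => (a i, a i + b i)) ∈ C ∧ s = a + b}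
  zero_mem' := by
    refine ⟨0, 0, ?_, by simp⟩
    convert C.zero_mem using 1
    funext i; simp
  add_mem' := by
    rintro s s' ⟨a, b, hb, rfl⟩ ⟨a', b', hb', rfl⟩
    refine ⟨a + a', b + b', ?_, by abel⟩
    convert C.add_mem hb hb' using 1
    funext i
    simp [Prod.ext_iff]; ring
  smul_mem' := by
    rintro c s ⟨a, b, hb, rfl⟩
    refine ⟨c • a, c • b, ?_, by simp [smul_add]⟩
    convert C.smul_mem ((c, c) : ZMod p × ZMod p) hb using 1
    funext i
    simp [Prod.ext_iff, Prod.smul_def, smul_eq_mul]; ring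


section Aux
variable {p n : ℕ}

/-- First-component code of `C`. -/
def proj1 (C : Submodule (ZMod p × ZMod p) (Fin n → ZMod p × ZMod p)) :
    Submodule (ZMod p) (Fin n → ZMod p) where
  carrier := {x | (fun i => (x i, 0)) ∈ C}
  zero_mem' := by
    have h : (fun _ : Fin n => ((0:ZMod p), (0:ZMod p))) = (0 : Fin n → ZMod p × ZMod p) := rfl
    show (fun i : Fin n => ((0:ZMod p), (0:ZMod p))) ∈ C
    rw [h]; exact C.zero_mem
  add_mem' := by
    intro a b ha hb
    show (fun i => (a i + b i, (0:ZMod p))) ∈ C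
    have h : (fun i => (a i + b i, (0:ZMod p)))
        = (fun i => (a i, (0:ZMod p))) + (fun i => (b i, (0:ZMod p))) := by
      funext i; simp [Prod.ext_iff]
    rw [h]; exact C.add_mem ha hb
  smul_mem' := by
    intro c a ha
    show (fun i => (c • a i, (0:ZMod p))) ∈ C
    have h : (fun i => (c • a i, (0:ZMod p)))
        = ((c, c) : ZMod p × ZMod p) • (fun i => (a i, (0:ZMod p))) := by
      funext i; simp [Prod.ext_iff, Prod.smul_def, smul_eq_mul]
    rw [h]; exact C.smul_mem _ ha

/-- Second-component code of `C`. -/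
def proj2 (C : Submodule (ZMod p × ZMod p) (Fin n → ZMod p × ZMod p)) :
    Submodule (ZMod p) (Fin n → ZMod p) where
  carrier := {x | (fun i => (0, x i)) ∈ C}
  zero_mem' := by
    have h : (fun _ : Fin n => ((0:ZMod p), (0:ZMod p))) = (0 : Fin n → ZMod p × ZMod p) := rfl
    show (fun i : Fin n => ((0:ZMod p), (0:ZMod p))) ∈ C
    rw [h]; exact C.zero_mem
  add_mem' := by
    intro a b ha hb
    show (fun i => ((0:ZMod p), a i + b i)) ∈ C
    have h : (fun i => ((0:ZMod p), a i + b i))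
        = (fun i => ((0:ZMod p), a i)) + (fun i => ((0:ZMod p), b i)) := by
      funext i; simp [Prod.ext_iff]
    rw [h]; exact C.add_mem ha hb
  smul_mem' := by
    intro c a ha
    show (fun i => ((0:ZMod p), c • a i)) ∈ C
    have h : (fun i => ((0:ZMod p), c • a i))
        = ((c, c) : ZMod p × ZMod p) • (fun i => ((0:ZMod p), a i)) := by
      funext i; simp [Prod.ext_iff, Prod.smul_def, smul_eq_mul]
    rw [h]; exact C.smul_mem _ ha

lemma mem_iff_proj (C : Submodule (ZMod p × ZMod p) (Fin n → ZMod p × ZMod p))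
    (z : Fin n → ZMod p × ZMod p) :
    z ∈ C ↔ (fun i => (z i).1) ∈ proj1 C ∧ (fun i => (z i).2) ∈ proj2 C := by
  constructor
  · intro hz
    constructor
    · show (fun i => ((z i).1, (0:ZMod p))) ∈ C
      have h : (fun i => ((z i).1, (0:ZMod p)))
          = (((1:ZMod p), (0:ZMod p)) : ZMod p × ZMod p) • z := by
        funext i; simp [Prod.ext_iff, Prod.smul_def, smul_eq_mul]
      rw [h]; exact C.smul_mem _ hz
    · show (fun i => ((0:ZMod p), (z i).2)) ∈ C
      have h : (fun i => ((0:ZMod p), (z i).2))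
          = (((0:ZMod p), (1:ZMod p)) : ZMod p × ZMod p) • z := by
        funext i; simp [Prod.ext_iff, Prod.smul_def, smul_eq_mul]
      rw [h]; exact C.smul_mem _ hz
  · rintro ⟨h1, h2⟩
    have h : z = (fun i => ((z i).1, (0:ZMod p))) + (fun i => ((0:ZMod p), (z i).2)) := by
      funext i; simp [Prod.ext_iff]
    rw [h]; exact C.add_mem h1 h2

lemma sum_prod_eq (u w : Fin n → ZMod p × ZMod p) :
    ∑ i, u i * w i = (∑ i, (u i).1 * (w i).1, ∑ i, (u i).2 * (w i).2) := by
  rw [Prod.ext_iff]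
  constructor <;> simp [Prod.fst_sum, Prod.snd_sum]

/-- The dual of a code over the product ring is componentwise. -/
lemma mem_dual_iff (C : Submodule (ZMod p × ZMod p) (Fin n → ZMod p × ZMod p))
    (u : Fin n → ZMod p × ZMod p) :
    u ∈ dualCode C ↔
      (fun i => (u i).1) ∈ dualCode (proj1 C) ∧ (fun i => (u i).2) ∈ dualCode (proj2 C) := by
  constructor
  · intro hu
    constructor
    · intro a ha
      have hmem : (fun i => ((a i : ZMod p), (0:ZMod p))) ∈ C := ha
      have := hu _ hmem
      rw [sum_prod_eq] at this
      simpa using congrArg Prod.fst this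
    · intro a ha
      have hmem : (fun i => ((0:ZMod p), (a i : ZMod p))) ∈ C := ha
      have := hu _ hmem
      rw [sum_prod_eq] at this
      simpa using congrArg Prod.snd this
  · rintro ⟨h1, h2⟩ w hw
    rw [mem_iff_proj] at hw
    rw [sum_prod_eq, Prod.mk_eq_zero]
    exact ⟨h1 _ hw.1, h2 _ hw.2⟩

lemma comb_eq (x y : Fin n → ZMod p) :
    ((0, 1) : ZMod p × ZMod p) • emb y + ((1, 0) : ZMod p × ZMod p) • emb x
      = fun i => (x i, y i) := by
  funext i
  simp [emb, Prod.ext_iff, Prod.smul_def, smul_eq_mul]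

end Aux

/-- Theorem 4.3, characterization part: a linear code `C` of length `n` over
`R = F_p + vF_p` is self-dual iff there are self-dual codes `𝒞₁, 𝒞₂` of length `n` over
`F_p` with `C = v𝒞₂ ⊕ (1-v)𝒞₁`. -/
theorem selfDual_iff_decomposition (p n : ℕ) (hp : p.Prime)
    (C : Submodule (ZMod p × ZMod p) (Fin n → ZMod p × ZMod p)) :
    C = dualCode C ↔
      ∃ 𝒞₁ 𝒞₂ : Submodule (ZMod p) (Fin n → ZMod p),
        𝒞₁ = dualCode 𝒞₁ ∧ 𝒞₂ = dualCode 𝒞₂ ∧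
        (C : Set (Fin n → ZMod p × ZMod p)) =
          {z | ∃ x ∈ 𝒞₁, ∃ y ∈ 𝒞₂,
            z = ((0, 1) : ZMod p × ZMod p) • emb y + ((1, 0) : ZMod p × ZMod p) • emb x} := by
  constructor
  · intro hC
    refine ⟨proj1 C, proj2 C, ?_, ?_, ?_⟩
    · apply le_antisymm
      · intro x hx
        have hm : (fun i => ((x i : ZMod p), (0:ZMod p))) ∈ C := hx
        rw [hC, mem_dual_iff] at hm
        exact hm.1
      · intro x hx
        have hm : (fun i => ((x i : ZMod p), (0:ZMod p))) ∈ dualCode C := by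
          rw [mem_dual_iff]
          exact ⟨hx, by intro a ha; simp⟩
        rw [← hC] at hm
        exact hm
    · apply le_antisymm
      · intro x hx
        have hm : (fun i => ((0:ZMod p), (x i : ZMod p))) ∈ C := hx
        rw [hC, mem_dual_iff] at hm
        exact hm.2
      · intro x hx
        have hm : (fun i => ((0:ZMod p), (x i : ZMod p))) ∈ dualCode C := by
          rw [mem_dual_iff]
          exact ⟨by intro a ha; simp, hx⟩
        rw [← hC] at hm
        exact hm
    · ext z
      simp only [SetLike.mem_coe, Set.mem_setOf_eq]
      rw [mem_iff_proj]
      constructor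
      · rintro ⟨h1, h2⟩
        exact ⟨_, h1, _, h2, by rw [comb_eq]⟩
      · rintro ⟨x, hx, y, hy, rfl⟩
        rw [comb_eq]
        exact ⟨hx, hy⟩
  · rintro ⟨D1, D2, hD1, hD2, hset⟩
    have hmem : ∀ z : Fin n → ZMod p × ZMod p,
        z ∈ C ↔ (fun i => (z i).1) ∈ D1 ∧ (fun i => (z i).2) ∈ D2 := by
      intro z
      have h0 : z ∈ C ↔ z ∈ (C : Set (Fin n → ZMod p × ZMod p)) := Iff.rfl
      rw [h0, hset]
      simp only [Set.mem_setOf_eq]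
      constructor
      · rintro ⟨x, hx, y, hy, rfl⟩
        rw [comb_eq]
        exact ⟨hx, hy⟩
      · rintro ⟨h1, h2⟩
        exact ⟨_, h1, _, h2, by rw [comb_eq]⟩
    have hp1 : proj1 C = D1 := by
      ext x
      show (fun i => ((x i : ZMod p), (0:ZMod p))) ∈ C ↔ x ∈ D1
      rw [hmem]
      constructor
      · rintro ⟨h, -⟩; exact h
      · intro h; exact ⟨h, D2.zero_mem⟩
    have hp2 : proj2 C = D2 := by
      ext x
      show (fun i => ((0:ZMod p), (x i : ZMod p))) ∈ C ↔ x ∈ D2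
      rw [hmem]
      constructor
      · rintro ⟨-, h⟩; exact h
      · intro h; exact ⟨D1.zero_mem, h⟩
    ext z
    rw [mem_dual_iff, hp1, hp2, ← hD1, ← hD2, hmem]
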